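/- For a monic non-constant polynomial p ∈ D[X] with multi-set of roots Ω_p in an algebraic closure of K, the integral closure of the pullback D(p) = D[X] + p·K[X] in K[X] is the ring Int_K(Ω_p, D̄) = {f ∈ K[X] : f(α) is integral over D for all α ∈ Ω_p}. -/

import Mathlib

open Polynomial

variable (D : Type*) [CommRing D] [IsDomain D]

noncomputable abbrev K := FractionRing D

/-- The pullback `D(p) = D[X] + p·K[X]` as a subring of `K[X]`. -/
noncomputable def Dp (p : D[X]) : Subring (Polynomial (K D)) where
  carrier := {f | ∃ r : D[X], ∃ q : Polynomial (K D),
    f = r.map (algebraMap D (K D)) + p.map (algebraMap D (K D)) * q}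
  zero_mem' := ⟨0, 0, by simp⟩
  one_mem' := ⟨1, 0, by simp⟩
  add_mem' := by
    rintro a b ⟨r1, q1, rfl⟩ ⟨r2, q2, rfl⟩
    exact ⟨r1 + r2, q1 + q2, by push_cast [Polynomial.map_add]; ring⟩
  mul_mem' := by
    rintro a b ⟨r1, q1, rfl⟩ ⟨r2, q2, rfl⟩
    exact ⟨r1 * r2, r1.map (algebraMap D (K D)) * q2 + q1 * (r2.map (algebraMap D (K D)))
      + p.map (algebraMap D (K D)) * q1 * q2, by push_cast [Polynomial.map_mul]; ring⟩
  neg_mem' := by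
    rintro a ⟨r, q, rfl⟩
    exact ⟨-r, -q, by push_cast [Polynomial.map_neg]; ring⟩

/-!
For `⊆`: evaluation at a root `α` of `p` sends `D(p)` into `D[α] ⊆ D̄`, hence sends elements
integral over `D(p)` to elements integral over `D`.

For `⊇`: pass to `L[X]` and the image `S` of `D(p)`. The variable `X` is integral over `S` (it is
a root of `p(T) - p`), so is `C c` for `c ∈ D̄`, and so is `p * C c` for every `c ∈ L` (scale the
roots of the minimal polynomial of `c` over `K` by `p`, using `p * K[X] ⊆ D(p)`); hence
`p * L[X]` lies in the integral closure of `S`. If `f(α) ∈ D̄` for every root `α`, then `f` is a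
root of `∏_α (T - f(α)) - ∏_α (f - f(α))`, a monic polynomial with coefficients integral over `S`
because `p ∣ ∏_α (f - f(α))`. Since `K[X] → L[X]` is injective, `f` is integral over `D(p)`.
-/

theorem isIntegral_of_monic_of_coeff_mem {B : Type*} [CommRing B] (R : Subring B) {P : B[X]}
    (hP : P.Monic) (hcoeff : ∀ i, P.coeff i ∈ R) {y : B} (hy : P.eval y = 0) :
    IsIntegral R y := by
  obtain ⟨Q, hQ, -, hQm⟩ := lifts_and_natDegree_eq_and_monic
    ((lifts_iff_coeff_lifts (f := algebraMap R B) P).2 fun i => ⟨⟨_, hcoeff i⟩, rfl⟩) hP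
  exact ⟨Q, hQm, by rw [← eval_map, hQ, hy]⟩

theorem isIntegral_mul_of_forall_mul_algebraMap_mem {F B : Type*} [CommRing F] [CommRing B]
    [Algebra F B] (R : Subring B) {s : B} (hs : s ∈ R)
    (hsF : ∀ a : F, s * algebraMap F B a ∈ R) {c : B} (hc : IsIntegral F c) :
    IsIntegral R (s * c) := by
  obtain ⟨m, hm, hmc⟩ := hc
  -- `s * c` is a root of `m.scaleRoots s`, whose lower coefficients `mᵢ * s ^ (n - i)` lie in `R`
  have hm' : (m.map (algebraMap F B)).Monic := hm.map _
  refine isIntegral_of_monic_of_coeff_mem R ((monic_scaleRoots_iff s).2 hm') (fun i => ?_)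
    (scaleRoots_eval₂_eq_zero (RingHom.id B) (show eval c _ = 0 by rwa [eval_map]))
  rw [coeff_scaleRoots]
  rcases lt_trichotomy i (m.map (algebraMap F B)).natDegree with hi | rfl | hi
  · obtain ⟨k, hk⟩ := Nat.exists_eq_add_of_lt hi
    rw [hk, show i + k + 1 - i = k + 1 by omega, coeff_map,
      show algebraMap F B (m.coeff i) * s ^ (k + 1) = s ^ k * (s * algebraMap F B (m.coeff i))
        by ring]
    exact mul_mem (pow_mem hs k) (hsF _)
  · rw [hm'.coeff_natDegree, Nat.sub_self, pow_zero, one_mul]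
    exact one_mem R
  · rw [coeff_eq_zero_of_natDegree_lt hi, zero_mul]
    exact zero_mem R

attribute [local instance] Polynomial.algebra in
theorem isIntegral_of_isIntegral_prod_sub {R B : Type*} [CommRing R] [CommRing B] [Nontrivial B]
    [Algebra R B] {s : Multiset B} (hs : s ≠ 0) (hint : ∀ b ∈ s, IsIntegral R b) {y : B}
    (hy : IsIntegral R (s.map (y - ·)).prod) : IsIntegral R y := by
  refine .of_aeval_monic_of_isIntegral_coeff (p := (s.map fun b => X - C b).prod)
    (monic_multiset_prod_of_monic _ _ fun b _ => monic_X_sub_C b) ?_ ?_ ?_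
  · rwa [natDegree_multiset_prod_X_sub_C_eq_card, Ne, Multiset.card_eq_zero]
  · simpa [eval_multiset_prod, Multiset.map_map, Function.comp_def] using hy
  · refine isIntegral_iff_isIntegral_coeff.1 (IsIntegral.multiset_prod fun P hP => ?_)
    obtain ⟨b, hb, rfl⟩ := Multiset.mem_map.1 hP
    rw [← map_X (algebraMap R B)]
    exact isIntegral_algebraMap.sub ((hint b hb).map (CAlgHom (R := R))).tower_top

theorem Subring.isIntegral_of_isIntegral_map {A B : Type*} [CommRing A] [CommRing B]
    (R : Subring A) {j : A →+* B} (hj : Function.Injective j) {x : A}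
    (hx : IsIntegral (R.map j) (j x)) : IsIntegral R x := by
  obtain ⟨P, hPm, hP⟩ := hx
  let e := R.equivMapOfInjective j hj
  have he : (j.comp (algebraMap R A)).comp e.symm.toRingHom = algebraMap (R.map j) B :=
    RingHom.ext fun r => congrArg Subtype.val (e.apply_symm_apply r)
  refine ⟨P.map e.symm.toRingHom, hPm.map _, hj ?_⟩
  rw [map_zero, hom_eval₂, eval₂_map, he, hP]

theorem IsIntegral.map_of_forall_isIntegral {R' A B : Type*} [CommRing R'] [CommRing A]
    [CommRing B] [Algebra R' B] (R : Subring A) (φ : A →+* B) (hR : ∀ r ∈ R, IsIntegral R' (φ r))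
    {a : A} (ha : IsIntegral R a) : IsIntegral R' (φ a) :=
  isIntegral_trans (A := integralClosure R' B) _ <| ha.map_of_comp_eq
    ((φ.comp R.subtype).codRestrict (integralClosure R' B) fun r => hR r r.2) φ rfl

theorem Polynomial.Splits.dvd_prod_roots_sub_C_eval {R : Type*} [CommRing R] [IsDomain R]
    {q : R[X]} (hq : q.Splits) (hm : q.Monic) (f : R[X]) :
    q ∣ (q.roots.map fun a => f - C (f.eval a)).prod := by
  conv_lhs => rw [hq.eq_prod_roots_of_monic hm]
  exact Multiset.prod_dvd_prod_of_dvd _ _ fun a _ => X_sub_C_dvd_sub_C_eval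

section MapDp

variable {R : Type*} [CommRing R] {L : Type*} [Field L] [Algebra R L] [Algebra (K R) L]
  [IsScalarTower R (K R) L]

theorem isIntegral_aeval_of_mem_Dp {p : R[X]} (hp : p.Monic) {x : L}
    (hx : (p.map (algebraMap R L)).eval x = 0) {r : (K R)[X]} (hr : r ∈ Dp R p) :
    IsIntegral R (aeval x r) := by
  rw [eval_map_algebraMap] at hx
  obtain ⟨r₀, q, rfl⟩ := hr
  have hxint : IsIntegral R x := ⟨p, hp, hx⟩
  rw [map_add, map_mul, aeval_map_algebraMap, aeval_map_algebraMap, hx, zero_mul, add_zero,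
    show x = ((⟨x, hxint⟩ : integralClosure R L) : L) from rfl, Subalgebra.aeval_coe]
  exact (aeval (⟨x, hxint⟩ : integralClosure R L) r₀).2

variable (L) in
noncomputable def mapDp (p : R[X]) : Subring L[X] :=
  (Dp R p).map (mapRingHom (algebraMap (K R) L))

theorem C_algebraMap_mem_mapDp (p : R[X]) (d : R) : C (algebraMap R L d) ∈ mapDp L p := by
  refine ⟨C (algebraMap R (K R) d), ⟨C d, 0, by simp⟩, ?_⟩
  simp [IsScalarTower.algebraMap_apply R (K R) L]

theorem map_mul_map_mem_mapDp (p : R[X]) (q : (K R)[X]) :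
    p.map (algebraMap R L) * q.map (algebraMap (K R) L) ∈ mapDp L p := by
  refine ⟨p.map (algebraMap R (K R)) * q, ⟨0, q, by simp⟩, ?_⟩
  simp [map_map, ← IsScalarTower.algebraMap_eq]

theorem map_mem_mapDp (p : R[X]) : p.map (algebraMap R L) ∈ mapDp L p := by
  simpa using map_mul_map_mem_mapDp (L := L) p 1

theorem isIntegral_X_mapDp {p : R[X]} (hp : p.Monic) (hdeg : 0 < p.natDegree) :
    IsIntegral (mapDp L p) (X : L[X]) := by
  refine .of_aeval_monic_of_isIntegral_coeff (p := (p.map (algebraMap R L)).map C)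
    ((hp.map _).map _) ?_ ?_ fun i => ?_
  · rw [((hp.map _).natDegree_map _), hp.natDegree_map]
    exact hdeg.ne'
  · rw [eval_map, eval₂_C_X]
    exact isIntegral_algebraMap (x := (⟨_, map_mem_mapDp p⟩ : mapDp L p))
  · rw [coeff_map, coeff_map]
    exact isIntegral_algebraMap (x := (⟨_, C_algebraMap_mem_mapDp p _⟩ : mapDp L p))

theorem isIntegral_C_mapDp (p : R[X]) {c : L} (hc : IsIntegral R c) :
    IsIntegral (mapDp L p) (C c) :=
  hc.map_of_comp_eq ((C.comp (algebraMap R L)).codRestrict _ (C_algebraMap_mem_mapDp p)) C rfl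

theorem isIntegral_mul_C_mapDp [IsDomain R] [Algebra.IsAlgebraic (K R) L] (p : R[X]) (c : L) :
    IsIntegral (mapDp L p) (p.map (algebraMap R L) * C c) := by
  refine isIntegral_mul_of_forall_mul_algebraMap_mem (F := K R) _ (map_mem_mapDp p) (fun a => ?_)
    ((Algebra.IsAlgebraic.isAlgebraic c).isIntegral.algebraMap (B := L[X]))
  simpa using map_mul_map_mem_mapDp (L := L) p (C a)

theorem mul_mem_integralClosure_mapDp [IsDomain R] [Algebra.IsAlgebraic (K R) L] {p : R[X]}
    (hp : p.Monic) (hdeg : 0 < p.natDegree) (g : L[X]) :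
    p.map (algebraMap R L) * g ∈ integralClosure (mapDp L p) L[X] := by
  induction g using Polynomial.induction_on with
  | C a => exact isIntegral_mul_C_mapDp p a
  | add u v hu hv => rw [mul_add]; exact add_mem hu hv
  | monomial n a _ =>
    rw [← mul_assoc]
    exact mul_mem (isIntegral_mul_C_mapDp p a) (pow_mem (isIntegral_X_mapDp hp hdeg) _)

theorem isIntegral_map_mapDp_of_forall_root [IsDomain R] [IsAlgClosed L]
    [Algebra.IsAlgebraic (K R) L] {p : R[X]} (hp : p.Monic) (hdeg : 0 < p.natDegree)
    {f : (K R)[X]} (hf : ∀ x : L, (p.map (algebraMap R L)).eval x = 0 →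
      IsIntegral R ((f.map (algebraMap (K R) L)).eval x)) :
    IsIntegral (mapDp L p) (f.map (algebraMap (K R) L)) := by
  set p' := p.map (algebraMap R L)
  set f' := f.map (algebraMap (K R) L)
  have hp' : p'.Monic := hp.map _
  have hroots : p'.roots ≠ 0 := by
    intro h
    have hcard := (IsAlgClosed.splits p').natDegree_eq_card_roots
    rw [h, hp.natDegree_map] at hcard
    simp [hcard] at hdeg
  obtain ⟨g, hg⟩ := (IsAlgClosed.splits p').dvd_prod_roots_sub_C_eval hp' f'
  refine isIntegral_of_isIntegral_prod_sub (s := p'.roots.map fun a => C (f'.eval a))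
    (by simpa using hroots) ?_ ?_
  · simp only [Multiset.mem_map]
    rintro _ ⟨a, ha, rfl⟩
    exact isIntegral_C_mapDp p (hf a ((mem_roots hp'.ne_zero).1 ha))
  · rw [Multiset.map_map, Function.comp_def, hg]
    exact mul_mem_integralClosure_mapDp hp hdeg g

end MapDp

theorem integralClosure_Dp (L : Type*) [Field L] [Algebra D L] [Algebra (K D) L]
    [IsScalarTower D (K D) L] [IsAlgClosed L] [Algebra.IsAlgebraic (K D) L]
    (p : D[X]) (hp : p.Monic) (hdeg : 0 < p.natDegree) :
    (integralClosure (↥(Dp D p)) (Polynomial (K D)) : Set (Polynomial (K D))) =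
      {f : Polynomial (K D) | ∀ x : L, (p.map (algebraMap D L)).eval x = 0 →
        IsIntegral D ((f.map (algebraMap (K D) L)).eval x)} := by
  ext f
  simp only [SetLike.mem_coe, Set.mem_ofPred_eq, mem_integralClosure_iff]
  constructor
  · intro hf x hx
    rw [eval_map_algebraMap]
    exact hf.map_of_forall_isIntegral (Dp D p) (aeval x).toRingHom
      fun r hr => isIntegral_aeval_of_mem_Dp hp hx hr
  · intro hf
    exact (Dp D p).isIntegral_of_isIntegral_map (map_injective _ (algebraMap (K D) L).injective)
      (isIntegral_map_mapDp_of_forall_root hp hdeg hf)
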